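/- arXiv:1606.03602 — 8 statements merged into one kernel-verified Lean document; each statement's English description precedes it below -/
import Mathlib

section
/- Assume (H0): T>0, a≥0, r,s:[0,T]→ℝ continuous and 0<α<β<1; and (H1): there are m>0, R₂>0 and R₁∈(0,R₂) such that m²<(π/T)²+(a/2)² and f_m(t,x)≥0 for all t∈[0,T] and x∈[c_m R₁,R₂], where f_m(t,x)=r(t)x^α−s(t)x^β+m²x. Let G_m:[0,T]×[0,T]→ℝ be continuous with G_m>0 on [0,T]² and G_m(t,s) ≥ G_m(s,s) ≥ c_m G_m(t,s) for all (t,s), where c_m∈(0,1). Let f̃:[0,T]×[0,R₂]→ℝ be continuous, nonnegative, and equal to f_m on [0,T]×[c_m R₁,R₂], and define F̃x(t)=∫₀ᵀ G_m(t,s) f̃(s,x(s)) ds. Assume (H5): there is a continuous g₀:[0,T]→ℝ with f_m(t,x) ≥ g₀(t) ≥ 0 for all t∈[0,T] and x∈[c_m R₁,R₁]; set γ(t)=∫₀ᵀ G_m(t,s) g₀(s) ds and assume either (H6) min_{t∈[0,T]} γ(t) ≥ c_m R₁ or (H7) max_{t∈[0,T]} γ(t) ≥ R₁. Then there do not exist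 λ>0 and x in the cone P = {x∈C([0,T],ℝ) : x(t) ≥ c_m‖x‖ for all t∈[0,T]} with min_{t∈[0,T]} x(t) = c_m R₁ such that x(t) = F̃x(t) + λ for all t∈[0,T]. -/
open Set Real

theorem statement7 (T a m α β cm R₁ R₂ : ℝ) (r s g₀ : ℝ → ℝ)
    (hT : 0 < T) (ha : 0 ≤ a)
    (hr : ContinuousOn r (Set.Icc 0 T)) (hs : ContinuousOn s (Set.Icc 0 T))
    (hα : 0 < α) (hαβ : α < β) (hβ : β < 1)
    (hm : 0 < m) (hR₁ : 0 < R₁) (hR₁₂ : R₁ < R₂)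
    (hm' : m ^ 2 < (Real.pi / T) ^ 2 + (a / 2) ^ 2)
    (hcm : cm ∈ Set.Ioo (0:ℝ) 1)
    (hH1 : ∀ t ∈ Set.Icc 0 T, ∀ x ∈ Set.Icc (cm * R₁) R₂,
      0 ≤ r t * x ^ α - s t * x ^ β + m ^ 2 * x)
    (G : ℝ → ℝ → ℝ)
    (hGc : ContinuousOn (fun p : ℝ × ℝ => G p.1 p.2) (Set.Icc 0 T ×ˢ Set.Icc 0 T))
    (hGpos : ∀ t ∈ Set.Icc 0 T, ∀ u ∈ Set.Icc 0 T, 0 < G t u)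
    (hG4 : ∀ t ∈ Set.Icc 0 T, ∀ u ∈ Set.Icc 0 T, G u u ≤ G t u ∧ cm * G t u ≤ G u u)
    (ftil : ℝ → ℝ → ℝ)
    (hftc : ContinuousOn (fun p : ℝ × ℝ => ftil p.1 p.2) (Set.Icc 0 T ×ˢ Set.Icc 0 R₂))
    (hftnn : ∀ t ∈ Set.Icc 0 T, ∀ x ∈ Set.Icc (0:ℝ) R₂, 0 ≤ ftil t x)
    (hfteq : ∀ t ∈ Set.Icc 0 T, ∀ x ∈ Set.Icc (cm * R₁) R₂,
      ftil t x = r t * x ^ α - s t * x ^ β + m ^ 2 * x)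
    (hg₀c : ContinuousOn g₀ (Set.Icc 0 T))
    (hH5 : ∀ t ∈ Set.Icc 0 T, 0 ≤ g₀ t ∧
      ∀ x ∈ Set.Icc (cm * R₁) R₁, g₀ t ≤ r t * x ^ α - s t * x ^ β + m ^ 2 * x)
    (hH67 :
      cm * R₁ ≤ sInf ((fun t => ∫ u in (0:ℝ)..T, G t u * g₀ u) '' Set.Icc 0 T) ∨
      R₁ ≤ sSup ((fun t => ∫ u in (0:ℝ)..T, G t u * g₀ u) '' Set.Icc 0 T)) :
    ¬ ∃ (lam : ℝ) (x : C(Set.Icc (0:ℝ) T, ℝ)),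
        0 < lam ∧ (∀ t : Set.Icc (0:ℝ) T, cm * ‖x‖ ≤ x t) ∧
        sInf (Set.range x) = cm * R₁ ∧
        ∀ t : Set.Icc (0:ℝ) T,
          x t = (∫ u in (0:ℝ)..T, G (t : ℝ) u * ftil u (Set.IccExtend hT.le x u)) + lam := by
  rintro ⟨lam, x, hlam, hcone, hinf, heq⟩
  obtain ⟨hcm0, hcm1⟩ := hcm
  have h0T : (0:ℝ) ∈ Set.Icc 0 T := ⟨le_refl 0, hT.le⟩
  have hne : (Set.range x).Nonempty := ⟨x ⟨0, h0T⟩, Set.mem_range_self _⟩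
  have hbdd : BddBelow (Set.range x) := by
    refine ⟨cm * ‖x‖, ?_⟩
    rintro _ ⟨t, rfl⟩; exact hcone t
  have hxt_ge : ∀ t : Set.Icc (0:ℝ) T, cm * R₁ ≤ x t := fun t => by
    rw [← hinf]; exact csInf_le hbdd (Set.mem_range_self t)
  have hnorm : ‖x‖ ≤ R₁ := by
    have h1 : cm * ‖x‖ ≤ cm * R₁ := by
      rw [← hinf]
      refine le_csInf hne ?_
      rintro _ ⟨t, rfl⟩; exact hcone t
    exact le_of_mul_le_mul_left h1 hcm0
  have hxt_le : ∀ t : Set.Icc (0:ℝ) T, x t ≤ R₁ := fun t =>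
    le_trans (le_trans (le_abs_self _) (x.norm_coe_le_norm t)) hnorm
  -- the extension stays in [cm*R₁, R₁]
  have hext_ge : ∀ u : ℝ, cm * R₁ ≤ Set.IccExtend hT.le x u := fun u => hxt_ge _
  have hext_le : ∀ u : ℝ, Set.IccExtend hT.le x u ≤ R₁ := fun u => hxt_le _
  have hcmR₁ : 0 < cm * R₁ := mul_pos hcm0 hR₁
  -- pointwise comparison on [0,T]
  have hpt : ∀ t ∈ Set.Icc (0:ℝ) T, ∀ u ∈ Set.Icc (0:ℝ) T,
      G t u * g₀ u ≤ G t u * ftil u (Set.IccExtend hT.le x u) := by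
    intro t ht u hu
    have hxm : Set.IccExtend hT.le x u ∈ Set.Icc (cm * R₁) R₂ :=
      ⟨hext_ge u, (hext_le u).trans hR₁₂.le⟩
    have := hfteq u hu _ hxm
    rw [this]
    exact mul_le_mul_of_nonneg_left
      ((hH5 u hu).2 _ ⟨hext_ge u, hext_le u⟩) (hGpos t ht u hu).le
  -- continuity of the extension
  have hextc : Continuous (Set.IccExtend hT.le x) := x.continuous.comp continuous_projIcc
  -- integrability
  have hint1 : ∀ t ∈ Set.Icc (0:ℝ) T,
      IntervalIntegrable (fun u => G t u * g₀ u) MeasureTheory.volume 0 T := by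
    intro t ht
    apply ContinuousOn.intervalIntegrable
    rw [Set.uIcc_of_le hT.le]
    apply ContinuousOn.mul
    · exact hGc.comp (f := fun u : ℝ => ((t : ℝ), u))
        (Continuous.continuousOn (by fun_prop)) (fun u hu => ⟨ht, hu⟩)
    · exact hg₀c
  have hint2 : ∀ t ∈ Set.Icc (0:ℝ) T,
      IntervalIntegrable (fun u => G t u * ftil u (Set.IccExtend hT.le x u))
        MeasureTheory.volume 0 T := by
    intro t ht
    apply ContinuousOn.intervalIntegrable
    rw [Set.uIcc_of_le hT.le]
    apply ContinuousOn.mul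
    · exact hGc.comp (f := fun u : ℝ => ((t : ℝ), u))
        (Continuous.continuousOn (by fun_prop)) (fun u hu => ⟨ht, hu⟩)
    · refine hftc.comp (f := fun u : ℝ => (u, Set.IccExtend hT.le x u))
        (Continuous.continuousOn (continuous_id.prodMk hextc)) ?_
      intro u hu
      exact ⟨hu, ⟨hcmR₁.le.trans (hext_ge u), (hext_le u).trans hR₁₂.le⟩⟩
  -- the key estimate: x t ≥ γ t + lam
  have hkey : ∀ t : Set.Icc (0:ℝ) T,
      (∫ u in (0:ℝ)..T, G (t:ℝ) u * g₀ u) + lam ≤ x t := by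
    intro t
    rw [heq t]
    have := intervalIntegral.integral_mono_on hT.le (hint1 t t.2) (hint2 t t.2)
      (hpt t t.2)
    linarith
  have hIccne : (Set.Icc (0:ℝ) T).Nonempty := ⟨0, h0T⟩
  rcases hH67 with h6 | h7
  · -- H6 case
    have hlb : ∀ t : Set.Icc (0:ℝ) T, cm * R₁ + lam ≤ x t := by
      intro t
      have hmem : (∫ u in (0:ℝ)..T, G (t:ℝ) u * g₀ u) ∈
          (fun t => ∫ u in (0:ℝ)..T, G t u * g₀ u) '' Set.Icc 0 T :=
        ⟨(t:ℝ), t.2, rfl⟩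
      have hbb : BddBelow ((fun t => ∫ u in (0:ℝ)..T, G t u * g₀ u) '' Set.Icc 0 T) := by
        refine ⟨0, ?_⟩
        rintro _ ⟨t', ht', rfl⟩
        apply intervalIntegral.integral_nonneg hT.le
        intro u hu
        exact mul_nonneg (hGpos t' ht' u hu).le (hH5 u hu).1
      have := csInf_le hbb hmem
      have := hkey t
      linarith
    have : cm * R₁ + lam ≤ sInf (Set.range x) := by
      refine le_csInf hne ?_
      rintro _ ⟨t, rfl⟩; exact hlb t
    rw [hinf] at this
    linarith
  · -- H7 case
    have hub : sSup ((fun t => ∫ u in (0:ℝ)..T, G t u * g₀ u) '' Set.Icc 0 T)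
        ≤ R₁ - lam := by
      refine csSup_le (hIccne.image _) ?_
      rintro _ ⟨t', ht', rfl⟩
      have := hkey ⟨t', ht'⟩
      have := hxt_le ⟨t', ht'⟩
      linarith
    linarith
end

section
/- Assume (C0): a≥0, 0<μ<1/2, c>0, T>0 and e:[0,T]→ℝ continuous. Let G_m:[0,T]×[0,T]→ℝ be continuous such that: for each continuous h:[0,T]→ℝ, t ↦ ∫₀ᵀ G_m(t,s)h(s) ds is the unique solution of x''+a x'+m² x=h, x(0)=x(T), x'(0)=x'(T); G_m>0 on [0,T]²; ∫₀ᵀ G_m(t,s) ds = 1/m² for all t; and G_m(t,s) ≥ G_m(s,s) ≥ c_m G_m(t,s) for all (t,s), where c_m∈(0,1). Suppose there are m>0, κ>0 and 0<R₁<R₂ such that m²<(π/T)²+(a/2)² and: (C1) e_* ≤ 0 and (c_m R₁)^μ ≥ (c+sqrt(c²−4μm²e_*))/(2μm²); (C2) (c_m R₁)^{1−2μ} ≥ κμ; (C3) ∫₀ᵀ G_m(s,s) e₊(s) ds ≥ c_m R₁/κ; (C4) e^* ≤ c R₂^μ; where e_* = min e, e^* = max e and e₊(t)=max{e(t),0}.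 Then there exists a twice continuously differentiable x:[0,T]→ℝ with x(t)>0 for all t∈[0,T], x''(t)+a x'(t) = (e(t)/μ)x(t)^{1−2μ} − (c/μ)x(t)^{1−μ} for all t∈[0,T], x(0)=x(T) and x'(0)=x'(T). -/
open Set Real

noncomputable def pd1 (T : ℝ) (x : ℝ → ℝ) : ℝ → ℝ := derivWithin x (Set.Icc 0 T)

noncomputable def pd2 (T : ℝ) (x : ℝ → ℝ) : ℝ → ℝ := derivWithin (pd1 T x) (Set.Icc 0 T)

/-- `x` is a (twice continuously differentiable) solution of the linear periodic problem
`x'' + a x' + m² x = h` on `[0,T]`, `x(0)=x(T)`, `x'(0)=x'(T)`. -/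
def IsLinSol (T a m : ℝ) (h x : ℝ → ℝ) : Prop :=
  ContDiffOn ℝ 2 x (Set.Icc 0 T) ∧
  (∀ t ∈ Set.Icc 0 T, pd2 T x t + a * pd1 T x t + m ^ 2 * x t = h t) ∧
  x 0 = x T ∧ pd1 T x 0 = pd1 T x T

/-- Property (G1): for each continuous `h`, `t ↦ ∫₀ᵀ G(t,s) h(s) ds` is the unique solution
of the linear periodic problem. -/
def PropG1 (T a m : ℝ) (G : ℝ → ℝ → ℝ) : Prop :=
  ∀ h : ℝ → ℝ, ContinuousOn h (Set.Icc 0 T) →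
    IsLinSol T a m h (fun t => ∫ s in (0:ℝ)..T, G t s * h s) ∧
    ∀ x : ℝ → ℝ, IsLinSol T a m h x →
      ∀ t ∈ Set.Icc 0 T, x t = ∫ s in (0:ℝ)..T, G t s * h s

/-!
Adding `m² x` to both sides, the solutions are the fixed points of the Hammerstein operator
`x ↦ ∫₀ᵀ G(·,s) F(s, x(s)) ds` with `F(s,x) = (e(s)/μ) x^{1-2μ} - (c/μ) x^{1-μ} + m² x`.
Writing `F(s,x) = x^{1-2μ}/μ · (e(s) - c z + μ m² z²)` with `z = x^μ`, condition (C1) places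
`r^μ`, `r = c_m R₁`, beyond the largest root of the quadratic, so `F(s,·)` is nondecreasing on
`[r, ∞)` and the operator is monotone there. By (C4) the constant `R₂` is an upper solution; by
(C1)–(C3) and `G(s,s) ≤ G(t,s)` the constant `r` is a lower solution. The iterates starting from
`R₂` then decrease to a fixed point with values in `[r, R₂]`.
-/

open MeasureTheory Filter Topology Function
open scoped Interval

theorem ContinuousOn.uncurry_comp {f : ℝ → ℝ → ℝ} {s u : Set ℝ} {w : ℝ → ℝ}
    (hf : ContinuousOn (uncurry f) (s ×ˢ u)) (hw : ContinuousOn w s) (hwu : MapsTo w s u) :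
    ContinuousOn (fun x => f x (w x)) s :=
  hf.comp (continuousOn_id.prodMk hw) fun _ hx => ⟨hx, hwu hx⟩

theorem intervalIntegral_mono_of_continuousOn {T : ℝ} {f g : ℝ → ℝ} (hT : 0 ≤ T)
    (hf : ContinuousOn f (Icc 0 T)) (hg : ContinuousOn g (Icc 0 T))
    (h : ∀ s ∈ Icc 0 T, f s ≤ g s) : ∫ s in (0:ℝ)..T, f s ≤ ∫ s in (0:ℝ)..T, g s :=
  intervalIntegral.integral_mono_on hT (hf.intervalIntegrable_of_Icc hT)
    (hg.intervalIntegrable_of_Icc hT) h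

section IntegralOperator

variable {T : ℝ} {K : ℝ → ℝ → ℝ}

theorem continuousOn_intervalIntegral_mul (hT : 0 ≤ T)
    (hK : ContinuousOn (uncurry K) (Icc 0 T ×ˢ Icc 0 T)) {v : ℝ → ℝ} {B : ℝ}
    (hv : AEStronglyMeasurable v (volume.restrict (Ioc 0 T))) (hB : ∀ s ∈ Icc 0 T, ‖v s‖ ≤ B) :
    ContinuousOn (fun t => ∫ s in (0:ℝ)..T, K t s * v s) (Icc 0 T) := by
  obtain ⟨M, hM⟩ := (isCompact_Icc.prod isCompact_Icc).exists_bound_of_continuousOn hK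
  have hIcc : Ι 0 T ⊆ Icc 0 T := uIcc_of_le hT ▸ uIoc_subset_uIcc
  intro t₀ ht₀
  refine intervalIntegral.continuousWithinAt_of_dominated_interval (bound := fun _ => M * B)
    ?_ ?_ intervalIntegrable_const (.of_forall fun s hs => ?_)
  · filter_upwards [self_mem_nhdsWithin] with t ht
    rw [uIoc_of_le hT]
    exact (((hK.uncurry_left t ht).mono Ioc_subset_Icc_self).aestronglyMeasurable
      measurableSet_Ioc).mul hv
  · filter_upwards [self_mem_nhdsWithin] with t ht
    refine .of_forall fun s hs => ?_
    rw [norm_mul]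
    exact mul_le_mul (hM (t, s) ⟨ht, hIcc hs⟩) (hB s (hIcc hs)) (norm_nonneg _)
      ((norm_nonneg _).trans (hM (t, s) ⟨ht, hIcc hs⟩))
  · exact (hK.uncurry_right s (hIcc hs) t₀ ht₀).mul continuousWithinAt_const

theorem tendsto_intervalIntegral_mul (hT : 0 ≤ T)
    (hK : ContinuousOn (uncurry K) (Icc 0 T ×ˢ Icc 0 T)) {v : ℕ → ℝ → ℝ} {v₀ : ℝ → ℝ} {B : ℝ}
    (hv : ∀ n, AEStronglyMeasurable (v n) (volume.restrict (Ioc 0 T)))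
    (hB : ∀ n, ∀ s ∈ Icc 0 T, ‖v n s‖ ≤ B)
    (hlim : ∀ s ∈ Icc 0 T, Tendsto (fun n => v n s) atTop (𝓝 (v₀ s))) {t : ℝ}
    (ht : t ∈ Icc 0 T) :
    Tendsto (fun n => ∫ s in (0:ℝ)..T, K t s * v n s) atTop
      (𝓝 (∫ s in (0:ℝ)..T, K t s * v₀ s)) := by
  obtain ⟨M, hM⟩ := (isCompact_Icc.prod isCompact_Icc).exists_bound_of_continuousOn hK
  have hIcc : Ι 0 T ⊆ Icc 0 T := uIcc_of_le hT ▸ uIoc_subset_uIcc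
  refine intervalIntegral.tendsto_integral_filter_of_dominated_convergence (fun _ => M * B)
    (.of_forall fun n => ?_) (.of_forall fun n => .of_forall fun s hs => ?_)
    intervalIntegrable_const (.of_forall fun s hs => (hlim s (hIcc hs)).const_mul _)
  · rw [uIoc_of_le hT]
    exact (((hK.uncurry_left t ht).mono Ioc_subset_Icc_self).aestronglyMeasurable
      measurableSet_Ioc).mul (hv n)
  · rw [norm_mul]
    exact mul_le_mul (hM (t, s) ⟨ht, hIcc hs⟩) (hB n s (hIcc hs)) (norm_nonneg _)
      ((norm_nonneg _).trans (hM (t, s) ⟨ht, hIcc hs⟩))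

end IntegralOperator

noncomputable def hammerstein (T : ℝ) (K f : ℝ → ℝ → ℝ) (w : ℝ → ℝ) (t : ℝ) : ℝ :=
  ∫ s in (0:ℝ)..T, K t s * f s (w s)

section Hammerstein

variable {T α β : ℝ} {K f : ℝ → ℝ → ℝ}

theorem hammerstein_mono (hT : 0 ≤ T) (hK : ContinuousOn (uncurry K) (Icc 0 T ×ˢ Icc 0 T))
    (hK₀ : ∀ t ∈ Icc 0 T, ∀ s ∈ Icc 0 T, 0 ≤ K t s)
    (hf : ContinuousOn (uncurry f) (Icc 0 T ×ˢ Icc α β))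
    (hf_mono : ∀ s ∈ Icc 0 T, MonotoneOn (f s) (Icc α β)) {w₁ w₂ : ℝ → ℝ}
    (hw₁ : ContinuousOn w₁ (Icc 0 T)) (hw₂ : ContinuousOn w₂ (Icc 0 T))
    (hw₁α : MapsTo w₁ (Icc 0 T) (Icc α β)) (hw₂α : MapsTo w₂ (Icc 0 T) (Icc α β))
    (hle : ∀ s ∈ Icc 0 T, w₁ s ≤ w₂ s) {t : ℝ} (ht : t ∈ Icc 0 T) :
    hammerstein T K f w₁ t ≤ hammerstein T K f w₂ t :=
  intervalIntegral_mono_of_continuousOn hT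
    ((hK.uncurry_left t ht).mul (hf.uncurry_comp hw₁ hw₁α))
    ((hK.uncurry_left t ht).mul (hf.uncurry_comp hw₂ hw₂α)) fun s hs =>
      mul_le_mul_of_nonneg_left (hf_mono s hs (hw₁α hs) (hw₂α hs) (hle s hs)) (hK₀ t ht s hs)

theorem continuousOn_hammerstein (hT : 0 ≤ T) (hK : ContinuousOn (uncurry K) (Icc 0 T ×ˢ Icc 0 T))
    (hf : ContinuousOn (uncurry f) (Icc 0 T ×ˢ Icc α β)) {w : ℝ → ℝ}
    (hw : ContinuousOn w (Icc 0 T)) (hwα : MapsTo w (Icc 0 T) (Icc α β)) :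
    ContinuousOn (hammerstein T K f w) (Icc 0 T) := by
  obtain ⟨B, hB⟩ := (isCompact_Icc.prod isCompact_Icc).exists_bound_of_continuousOn hf
  exact continuousOn_intervalIntegral_mul hT hK
    (((hf.uncurry_comp hw hwα).mono Ioc_subset_Icc_self).aestronglyMeasurable measurableSet_Ioc)
    fun s hs => hB (s, w s) ⟨hs, hwα hs⟩

theorem hammerstein_mapsTo (hT : 0 ≤ T) (hK : ContinuousOn (uncurry K) (Icc 0 T ×ˢ Icc 0 T))
    (hK₀ : ∀ t ∈ Icc 0 T, ∀ s ∈ Icc 0 T, 0 ≤ K t s)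
    (hf : ContinuousOn (uncurry f) (Icc 0 T ×ˢ Icc α β))
    (hf_mono : ∀ s ∈ Icc 0 T, MonotoneOn (f s) (Icc α β))
    (hlower : ∀ t ∈ Icc 0 T, α ≤ hammerstein T K f (fun _ => α) t)
    (hupper : ∀ t ∈ Icc 0 T, hammerstein T K f (fun _ => β) t ≤ β) {w : ℝ → ℝ}
    (hw : ContinuousOn w (Icc 0 T)) (hwα : MapsTo w (Icc 0 T) (Icc α β)) :
    MapsTo (hammerstein T K f w) (Icc 0 T) (Icc α β) := by
  have hαβ : α ≤ β := (hwα ⟨le_rfl, hT⟩).1.trans (hwα ⟨le_rfl, hT⟩).2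
  intro t ht
  constructor
  · exact (hlower t ht).trans (hammerstein_mono hT hK hK₀ hf hf_mono continuousOn_const hw
      (fun _ _ => ⟨le_rfl, hαβ⟩) hwα (fun s hs => (hwα hs).1) ht)
  · exact (hammerstein_mono hT hK hK₀ hf hf_mono hw continuousOn_const hwα
      (fun _ _ => ⟨hαβ, le_rfl⟩) (fun s hs => (hwα hs).2) ht).trans (hupper t ht)

theorem hammerstein_eq_of_tendsto (hT : 0 ≤ T)
    (hK : ContinuousOn (uncurry K) (Icc 0 T ×ˢ Icc 0 T))
    (hf : ContinuousOn (uncurry f) (Icc 0 T ×ˢ Icc α β)) {u : ℕ → ℝ → ℝ} {x : ℝ → ℝ}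
    (hu : ∀ n, ContinuousOn (u n) (Icc 0 T)) (huα : ∀ n, MapsTo (u n) (Icc 0 T) (Icc α β))
    (hu_succ : ∀ n, u (n + 1) = hammerstein T K f (u n)) (hx : MapsTo x (Icc 0 T) (Icc α β))
    (hlim : ∀ t ∈ Icc 0 T, Tendsto (fun n => u n t) atTop (𝓝 (x t))) :
    ContinuousOn x (Icc 0 T) ∧ ∀ t ∈ Icc 0 T, hammerstein T K f x t = x t := by
  have hf_lim : ∀ s ∈ Icc 0 T, Tendsto (fun n => f s (u n s)) atTop (𝓝 (f s (x s))) :=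
    fun s hs => ((hf.uncurry_left s hs) (x s) (hx hs)).tendsto.comp
      (tendsto_nhdsWithin_iff.2 ⟨hlim s hs, .of_forall fun n => huα n hs⟩)
  have hf_meas : ∀ n, AEStronglyMeasurable (fun s => f s (u n s)) (volume.restrict (Ioc 0 T)) :=
    fun n => ((hf.uncurry_comp (hu n) (huα n)).mono Ioc_subset_Icc_self).aestronglyMeasurable
      measurableSet_Ioc
  have hfx_meas : AEStronglyMeasurable (fun s => f s (x s)) (volume.restrict (Ioc 0 T)) :=
    aestronglyMeasurable_of_tendsto_ae atTop hf_meas <| (ae_restrict_iff' measurableSet_Ioc).2 <|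
      .of_forall fun s hs => hf_lim s (Ioc_subset_Icc_self hs)
  obtain ⟨B, hB⟩ := (isCompact_Icc.prod isCompact_Icc).exists_bound_of_continuousOn hf
  have hfix : ∀ t ∈ Icc 0 T, hammerstein T K f x t = x t := fun t ht => by
    refine tendsto_nhds_unique (tendsto_intervalIntegral_mul hT hK hf_meas
      (fun n s hs => hB (s, u n s) ⟨hs, huα n hs⟩) hf_lim ht) ?_
    have h := (hlim t ht).comp (tendsto_add_atTop_nat 1)
    simp only [comp_def, hu_succ] at h
    exact h
  refine ⟨?_, hfix⟩
  exact (continuousOn_intervalIntegral_mul hT hK hfx_meas fun s hs => hB (s, x s) ⟨hs, hx hs⟩).congr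
    fun t ht => (hfix t ht).symm

theorem exists_fixedPoint_hammerstein (hT : 0 ≤ T) (hαβ : α ≤ β)
    (hK : ContinuousOn (uncurry K) (Icc 0 T ×ˢ Icc 0 T))
    (hK₀ : ∀ t ∈ Icc 0 T, ∀ s ∈ Icc 0 T, 0 ≤ K t s)
    (hf : ContinuousOn (uncurry f) (Icc 0 T ×ˢ Icc α β))
    (hf_mono : ∀ s ∈ Icc 0 T, MonotoneOn (f s) (Icc α β))
    (hlower : ∀ t ∈ Icc 0 T, α ≤ hammerstein T K f (fun _ => α) t)
    (hupper : ∀ t ∈ Icc 0 T, hammerstein T K f (fun _ => β) t ≤ β) :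
    ∃ x : ℝ → ℝ, ContinuousOn x (Icc 0 T) ∧ MapsTo x (Icc 0 T) (Icc α β) ∧
      ∀ t ∈ Icc 0 T, hammerstein T K f x t = x t := by
  set u : ℕ → ℝ → ℝ := fun n => (hammerstein T K f)^[n] fun _ => β
  have hu_succ : ∀ n, u (n + 1) = hammerstein T K f (u n) := fun n => iterate_succ_apply' _ n _
  have hu : ∀ n, ContinuousOn (u n) (Icc 0 T) ∧ MapsTo (u n) (Icc 0 T) (Icc α β) := by
    intro n
    induction n with
    | zero => exact ⟨continuousOn_const, fun _ _ => ⟨hαβ, le_rfl⟩⟩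
    | succ n ih =>
      rw [hu_succ]
      exact ⟨continuousOn_hammerstein hT hK hf ih.1 ih.2,
        hammerstein_mapsTo hT hK hK₀ hf hf_mono hlower hupper ih.1 ih.2⟩
  have hu_anti : ∀ n, ∀ t ∈ Icc 0 T, u (n + 1) t ≤ u n t := by
    intro n
    induction n with
    | zero => exact hupper
    | succ n ih =>
      intro t ht
      have h := hammerstein_mono hT hK hK₀ hf hf_mono (hu _).1 (hu n).1 (hu _).2 (hu n).2 ih ht
      rwa [← hu_succ, ← hu_succ] at h
  have hbdd : ∀ t ∈ Icc 0 T, BddBelow (range fun n => u n t) := fun t ht =>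
    ⟨α, by rintro _ ⟨n, rfl⟩; exact ((hu n).2 ht).1⟩
  have hx : MapsTo (fun t => ⨅ n, u n t) (Icc 0 T) (Icc α β) := fun t ht =>
    ⟨le_ciInf fun n => ((hu n).2 ht).1, (ciInf_le (hbdd t ht) 0).trans ((hu 0).2 ht).2⟩
  obtain ⟨hx_cont, hfix⟩ := hammerstein_eq_of_tendsto hT hK hf (fun n => (hu n).1)
    (fun n => (hu n).2) hu_succ hx fun t ht =>
      tendsto_atTop_ciInf (antitone_nat_of_succ_le fun n => hu_anti n t ht) (hbdd t ht)
  exact ⟨_, hx_cont, hx, hfix⟩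

end Hammerstein

theorem sub_le_mul_sq_of_root_le {A c d z : ℝ} (hA : 0 < A)
    (hz : (c + √(c ^ 2 - 4 * A * d)) / (2 * A) ≤ z) : c * z - d ≤ A * z ^ 2 := by
  rw [div_le_iff₀ (by positivity)] at hz
  obtain ⟨-, hsq⟩ := Real.sqrt_le_iff.1 (show √(c ^ 2 - 4 * A * d) ≤ 2 * A * z - c by linarith)
  nlinarith

noncomputable def shiftedRhs (e : ℝ → ℝ) (μ c m s x : ℝ) : ℝ :=
  e s / μ * x ^ (1 - 2 * μ) - c / μ * x ^ (1 - μ) + m ^ 2 * x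

section ShiftedRhs

variable {T : ℝ} {e : ℝ → ℝ} {μ c m estar s x : ℝ}

theorem rpow_one_sub_two_mul_mul_sq (hx : 0 < x) : x ^ (1 - 2 * μ) * (x ^ μ) ^ 2 = x := by
  rw [sq, ← mul_assoc, ← rpow_add hx, ← rpow_add hx]
  ring_nf
  exact rpow_one x

theorem shiftedRhs_eq (hμ : 0 < μ) (hx : 0 < x) :
    shiftedRhs e μ c m s x = x ^ (1 - 2 * μ) / μ * (e s - c * x ^ μ + μ * m ^ 2 * (x ^ μ) ^ 2) := by
  have h₁ : x ^ (1 - μ) = x ^ (1 - 2 * μ) * x ^ μ := by rw [← rpow_add hx]; ring_nf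
  have h₂ := rpow_one_sub_two_mul_mul_sq (μ := μ) hx
  rw [shiftedRhs, h₁]
  -- abstract the powers of `x` so that `← h₂` rewrites only the linear term
  set y := x ^ (1 - 2 * μ)
  set p := x ^ μ
  rw [← h₂]
  field_simp

theorem continuousOn_shiftedRhs (he : ContinuousOn e (Icc 0 T)) :
    ContinuousOn (uncurry (shiftedRhs e μ c m)) (Icc 0 T ×ˢ Ioi 0) := by
  have he' : ContinuousOn (fun p : ℝ × ℝ => e p.1) (Icc 0 T ×ˢ Ioi 0) :=
    he.comp continuousOn_fst fun _ hp => hp.1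
  have hx : ContinuousOn (fun p : ℝ × ℝ => p.2) (Icc 0 T ×ˢ Ioi 0) := continuousOn_snd
  have hx₀ : ∀ p ∈ Icc 0 T ×ˢ Ioi (0:ℝ), ∀ r : ℝ, p.2 ≠ 0 ∨ 0 ≤ r := fun _ hp _ => Or.inl hp.2.ne'
  exact (((he'.div_const μ).mul (hx.rpow_const fun p hp => hx₀ p hp _)).sub
    (continuousOn_const.mul (hx.rpow_const fun p hp => hx₀ p hp _))).add
    (continuousOn_const.mul hx)

theorem shiftedRhs_le (hμ : 0 < μ) (hx : 0 < x) (he : e s ≤ c * x ^ μ) :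
    shiftedRhs e μ c m s x ≤ m ^ 2 * x := by
  rw [shiftedRhs_eq hμ hx]
  calc _ ≤ x ^ (1 - 2 * μ) / μ * (μ * m ^ 2 * (x ^ μ) ^ 2) :=
        mul_le_mul_of_nonneg_left (by linarith) (by positivity)
    _ = m ^ 2 * (x ^ (1 - 2 * μ) * (x ^ μ) ^ 2) := by field_simp
    _ = m ^ 2 * x := by rw [rpow_one_sub_two_mul_mul_sq hx]

theorem rpow_div_mul_max_le_shiftedRhs (hμ : 0 < μ) (hm : 0 < m) (hx : 0 < x)
    (hes : estar ≤ e s) (hestar : estar ≤ 0)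
    (hroot : (c + √(c ^ 2 - 4 * μ * m ^ 2 * estar)) / (2 * μ * m ^ 2) ≤ x ^ μ) :
    x ^ (1 - 2 * μ) / μ * max (e s) 0 ≤ shiftedRhs e μ c m s x := by
  have hquad := sub_le_mul_sq_of_root_le (A := μ * m ^ 2) (d := estar) (by positivity)
    (by simpa only [mul_assoc] using hroot)
  rw [shiftedRhs_eq hμ hx]
  exact mul_le_mul_of_nonneg_left (max_le (by linarith) (by linarith)) (by positivity)

theorem shiftedRhs_monotoneOn {r : ℝ} (hμ : 0 < μ) (hμ₂ : μ ≤ 1 / 2) (hm : 0 < m) (hr : 0 < r)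
    (hes : estar ≤ e s)
    (hroot : (c + √(c ^ 2 - 4 * μ * m ^ 2 * estar)) / (2 * μ * m ^ 2) ≤ r ^ μ) :
    MonotoneOn (shiftedRhs e μ c m s) (Ici r) := by
  intro x hx y hy hxy
  have hx₀ : 0 < x := hr.trans_le hx
  have hy₀ : 0 < y := hr.trans_le hy
  have hrx : r ^ μ ≤ x ^ μ := rpow_le_rpow hr.le hx hμ.le
  have hxy' : x ^ μ ≤ y ^ μ := rpow_le_rpow hx₀.le hxy hμ.le
  have hquad := sub_le_mul_sq_of_root_le (A := μ * m ^ 2) (d := estar) (by positivity)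
    (by simpa only [mul_assoc] using hroot.trans hrx)
  have hc : c ≤ 2 * μ * m ^ 2 * x ^ μ := by
    rw [div_le_iff₀ (by positivity)] at hroot
    nlinarith [Real.sqrt_nonneg (c ^ 2 - 4 * μ * m ^ 2 * estar),
      mul_le_mul_of_nonneg_left hrx (by positivity : (0:ℝ) ≤ 2 * μ * m ^ 2)]
  rw [shiftedRhs_eq hμ hx₀, shiftedRhs_eq hμ hy₀]
  refine mul_le_mul (div_le_div_of_nonneg_right (rpow_le_rpow hx₀.le hxy (by linarith)) hμ.le)
    ?_ (by linarith) (by positivity)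
  nlinarith [mul_nonneg (sub_nonneg.2 hxy') (show 0 ≤ μ * m ^ 2 * (x ^ μ + y ^ μ) - c by
    nlinarith [mul_le_mul_of_nonneg_left hxy' (by positivity : (0:ℝ) ≤ μ * m ^ 2)])]

end ShiftedRhs

section GreenFunction

variable {T μ c m : ℝ} {e : ℝ → ℝ} {G : ℝ → ℝ → ℝ}

theorem hammerstein_shiftedRhs_le {R : ℝ} (hT : 0 ≤ T) (hμ : 0 < μ) (hm : m ≠ 0) (hR : 0 < R)
    (he : ContinuousOn e (Icc 0 T)) (heR : ∀ s ∈ Icc 0 T, e s ≤ c * R ^ μ)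
    (hG : ContinuousOn (uncurry G) (Icc 0 T ×ˢ Icc 0 T))
    (hG₀ : ∀ t ∈ Icc 0 T, ∀ s ∈ Icc 0 T, 0 ≤ G t s)
    (hG_int : ∀ t ∈ Icc 0 T, ∫ s in (0:ℝ)..T, G t s = 1 / m ^ 2) {t : ℝ} (ht : t ∈ Icc 0 T) :
    hammerstein T G (shiftedRhs e μ c m) (fun _ => R) t ≤ R :=
  calc hammerstein T G (shiftedRhs e μ c m) (fun _ => R) t
      ≤ ∫ s in (0:ℝ)..T, G t s * (m ^ 2 * R) :=
        intervalIntegral_mono_of_continuousOn hT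
          ((hG.uncurry_left t ht).mul ((continuousOn_shiftedRhs he).uncurry_right R hR))
          ((hG.uncurry_left t ht).mul continuousOn_const) fun s hs =>
            mul_le_mul_of_nonneg_left (shiftedRhs_le hμ hR (heR s hs)) (hG₀ t ht s hs)
    _ = R := by
      rw [intervalIntegral.integral_mul_const, hG_int t ht]
      field_simp

theorem le_hammerstein_shiftedRhs {estar κ r : ℝ} (hT : 0 ≤ T) (hμ : 0 < μ) (hm : 0 < m)
    (hr : 0 < r) (hκ : 0 < κ) (he : ContinuousOn e (Icc 0 T))
    (hes : ∀ s ∈ Icc 0 T, estar ≤ e s) (hestar : estar ≤ 0)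
    (hroot : (c + √(c ^ 2 - 4 * μ * m ^ 2 * estar)) / (2 * μ * m ^ 2) ≤ r ^ μ)
    (hκr : κ * μ ≤ r ^ (1 - 2 * μ))
    (hG : ContinuousOn (uncurry G) (Icc 0 T ×ˢ Icc 0 T))
    (hG₀ : ∀ t ∈ Icc 0 T, ∀ s ∈ Icc 0 T, 0 ≤ G t s)
    (hG_diag : ∀ t ∈ Icc 0 T, ∀ s ∈ Icc 0 T, G s s ≤ G t s)
    (he_pos : r / κ ≤ ∫ s in (0:ℝ)..T, G s s * max (e s) 0) {t : ℝ} (ht : t ∈ Icc 0 T) :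
    r ≤ hammerstein T G (shiftedRhs e μ c m) (fun _ => r) t := by
  set k := r ^ (1 - 2 * μ) / μ
  have hk : 0 ≤ k := by positivity
  have hep : ContinuousOn (fun s => max (e s) 0) (Icc 0 T) := he.sup continuousOn_const
  have hGt := hG.uncurry_left t ht
  have hG_diag_cont : ContinuousOn (fun s => G s s) (Icc 0 T) :=
    hG.uncurry_comp continuousOn_id (mapsTo_id _)
  calc r ≤ k * (r / κ) := by
        rw [show k * (r / κ) = r * (r ^ (1 - 2 * μ) / (κ * μ)) by ring]
        exact le_mul_of_one_le_right hr.le ((one_le_div (by positivity)).2 hκr)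
    _ ≤ k * ∫ s in (0:ℝ)..T, G s s * max (e s) 0 := mul_le_mul_of_nonneg_left he_pos hk
    _ ≤ k * ∫ s in (0:ℝ)..T, G t s * max (e s) 0 :=
        mul_le_mul_of_nonneg_left (intervalIntegral_mono_of_continuousOn hT
          (hG_diag_cont.mul hep) (hGt.mul hep) fun s hs =>
            mul_le_mul_of_nonneg_right (hG_diag t ht s hs) (le_max_right _ _)) hk
    _ = ∫ s in (0:ℝ)..T, G t s * (k * max (e s) 0) := by
        rw [← intervalIntegral.integral_const_mul]
        congr 1 with s
        ring
    _ ≤ hammerstein T G (shiftedRhs e μ c m) (fun _ => r) t :=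
        intervalIntegral_mono_of_continuousOn hT (hGt.mul (continuousOn_const.mul hep))
          (hGt.mul ((continuousOn_shiftedRhs he).uncurry_right r hr)) fun s hs =>
            mul_le_mul_of_nonneg_left
              (rpow_div_mul_max_le_shiftedRhs hμ hm hr (hes s hs) hestar hroot) (hG₀ t ht s hs)

end GreenFunction

theorem statement9_general (T a μ c m κ cm R₁ R₂ estar estar' : ℝ) (e : ℝ → ℝ)
    (hμ0 : 0 < μ) (hμ : μ < 1/2) (hT : 0 < T)
    (he : ContinuousOn e (Set.Icc 0 T))
    (hm : 0 < m) (hκ : 0 < κ) (hR₁ : 0 < R₁) (hR₁₂ : R₁ < R₂)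
    (hcm : cm ∈ Set.Ioo (0:ℝ) 1)
    (G : ℝ → ℝ → ℝ)
    (hGc : ContinuousOn (fun p : ℝ × ℝ => G p.1 p.2) (Set.Icc 0 T ×ˢ Set.Icc 0 T))
    (hG1 : PropG1 T a m G)
    (hGpos : ∀ t ∈ Set.Icc 0 T, ∀ u ∈ Set.Icc 0 T, 0 < G t u)
    (hG3 : ∀ t ∈ Set.Icc 0 T, (∫ u in (0:ℝ)..T, G t u) = 1 / m ^ 2)
    (hG4 : ∀ t ∈ Set.Icc 0 T, ∀ u ∈ Set.Icc 0 T, G u u ≤ G t u ∧ cm * G t u ≤ G u u)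
    (hestar : IsLeast (e '' Set.Icc 0 T) estar)
    (hestar' : IsGreatest (e '' Set.Icc 0 T) estar')
    (hC1 : estar ≤ 0 ∧
      (c + Real.sqrt (c ^ 2 - 4 * μ * m ^ 2 * estar)) / (2 * μ * m ^ 2) ≤ (cm * R₁) ^ μ)
    (hC2 : κ * μ ≤ (cm * R₁) ^ (1 - 2 * μ))
    (hC3 : cm * R₁ / κ ≤ ∫ u in (0:ℝ)..T, G u u * max (e u) 0)
    (hC4 : estar' ≤ c * R₂ ^ μ) :
    ∃ x : ℝ → ℝ, ContDiffOn ℝ 2 x (Set.Icc 0 T) ∧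
      (∀ t ∈ Set.Icc 0 T, 0 < x t) ∧
      (∀ t ∈ Set.Icc 0 T,
        pd2 T x t + a * pd1 T x t =
          (e t / μ) * x t ^ (1 - 2 * μ) - (c / μ) * x t ^ (1 - μ)) ∧
      x 0 = x T ∧ pd1 T x 0 = pd1 T x T := by
  have hr : 0 < cm * R₁ := mul_pos hcm.1 hR₁
  have hrR₂ : cm * R₁ ≤ R₂ := by nlinarith [hcm.2]
  have hes : ∀ s ∈ Icc 0 T, estar ≤ e s := fun s hs => hestar.2 ⟨s, hs, rfl⟩
  have heR : ∀ s ∈ Icc 0 T, e s ≤ c * R₂ ^ μ := fun s hs => (hestar'.2 ⟨s, hs, rfl⟩).trans hC4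
  have hG₀ : ∀ t ∈ Icc 0 T, ∀ s ∈ Icc 0 T, 0 ≤ G t s := fun t ht s hs => (hGpos t ht s hs).le
  have hf : ContinuousOn (uncurry (shiftedRhs e μ c m)) (Icc 0 T ×ˢ Icc (cm * R₁) R₂) :=
    (continuousOn_shiftedRhs he).mono (prod_mono_right fun _ hx => hr.trans_le hx.1)
  obtain ⟨x, hx, hxr, hfix⟩ := exists_fixedPoint_hammerstein hT.le hrR₂ hGc hG₀ hf
    (fun s hs => (shiftedRhs_monotoneOn hμ0 hμ.le hm hr (hes s hs) hC1.2).mono Icc_subset_Ici_self)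
    (fun t ht => le_hammerstein_shiftedRhs hT.le hμ0 hm hr hκ he hes hC1.1 hC1.2 hC2 hGc hG₀
      (fun t ht s hs => (hG4 t ht s hs).1) hC3 ht)
    (fun t ht => hammerstein_shiftedRhs_le hT.le hμ0 hm.ne' (hr.trans_le hrR₂) he heR hGc hG₀ hG3 ht)
  obtain ⟨hsmooth, heq, hper, hper'⟩ : IsLinSol T a m (fun s => shiftedRhs e μ c m s (x s))
      (hammerstein T G (shiftedRhs e μ c m) x) := (hG1 _ (hf.uncurry_comp hx hxr)).1
  refine ⟨_, hsmooth, fun t ht => ?_, fun t ht => ?_, hper, hper'⟩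
  · rw [hfix t ht]
    exact hr.trans_le (hxr ht).1
  · have h := heq t ht
    simp only [shiftedRhs, hfix t ht] at h
    rw [hfix t ht]
    linarith

theorem statement9 (T a μ c m κ cm R₁ R₂ estar estar' : ℝ) (e : ℝ → ℝ)
    (ha : 0 ≤ a) (hμ0 : 0 < μ) (hμ : μ < 1/2) (hc : 0 < c) (hT : 0 < T)
    (he : ContinuousOn e (Set.Icc 0 T))
    (hm : 0 < m) (hκ : 0 < κ) (hR₁ : 0 < R₁) (hR₁₂ : R₁ < R₂)
    (hm' : m ^ 2 < (Real.pi / T) ^ 2 + (a / 2) ^ 2)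
    (hcm : cm ∈ Set.Ioo (0:ℝ) 1)
    (G : ℝ → ℝ → ℝ)
    (hGc : ContinuousOn (fun p : ℝ × ℝ => G p.1 p.2) (Set.Icc 0 T ×ˢ Set.Icc 0 T))
    (hG1 : PropG1 T a m G)
    (hGpos : ∀ t ∈ Set.Icc 0 T, ∀ u ∈ Set.Icc 0 T, 0 < G t u)
    (hG3 : ∀ t ∈ Set.Icc 0 T, (∫ u in (0:ℝ)..T, G t u) = 1 / m ^ 2)
    (hG4 : ∀ t ∈ Set.Icc 0 T, ∀ u ∈ Set.Icc 0 T, G u u ≤ G t u ∧ cm * G t u ≤ G u u)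
    (hestar : IsLeast (e '' Set.Icc 0 T) estar)
    (hestar' : IsGreatest (e '' Set.Icc 0 T) estar')
    (hC1 : estar ≤ 0 ∧
      (c + Real.sqrt (c ^ 2 - 4 * μ * m ^ 2 * estar)) / (2 * μ * m ^ 2) ≤ (cm * R₁) ^ μ)
    (hC2 : κ * μ ≤ (cm * R₁) ^ (1 - 2 * μ))
    (hC3 : cm * R₁ / κ ≤ ∫ u in (0:ℝ)..T, G u u * max (e u) 0)
    (hC4 : estar' ≤ c * R₂ ^ μ) :
    ∃ x : ℝ → ℝ, ContDiffOn ℝ 2 x (Set.Icc 0 T) ∧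
      (∀ t ∈ Set.Icc 0 T, 0 < x t) ∧
      (∀ t ∈ Set.Icc 0 T,
        pd2 T x t + a * pd1 T x t =
          (e t / μ) * x t ^ (1 - 2 * μ) - (c / μ) * x t ^ (1 - μ)) ∧
      x 0 = x T ∧ pd1 T x 0 = pd1 T x T :=
  statement9_general T a μ c m κ cm R₁ R₂ estar estar' e hμ0 hμ hT he hm hκ hR₁ hR₁₂ hcm G hGc hG1
    hGpos hG3 hG4 hestar hestar' hC1 hC2 hC3 hC4
end

section
/- Let 0<μ<1/2, c>0, m>0, e_*>0, e^*≥e_* and c_m∈(0,1) satisfy (c²/(μ e_*²))·((1/c_m^μ)e^* − e_*) ≤ m². Set R₂ = (1/c_m)(e^*/c)^{1/μ} and f_*(x) = (e_*/μ)x^{1−2μ} − (c/μ)x^{1−μ} + m²x for x≥0. Then f_*(x) ≥ 0 for all x∈[0,R₂]. Consequently, if e:[0,T]→ℝ is continuous with min e = e_* and max e = e^*, then f_m(t,x) = (e(t)/μ)x^{1−2μ} − (c/μ)x^{1−μ} + m²x ≥ 0 for all t∈[0,T] and x∈[0,R₂]. -/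
/-! Substituting `u = x ^ μ` factors the expression as `x ^ (1 - 2μ) / μ` times the quadratic
`e - c u + μ m² u²`, and `x ≤ R₂` means `c u ≤ e^* / c_m ^ μ`. The quadratic is trivially
nonnegative when `c u ≤ e`; otherwise `e_* ≤ e < c u`, and the hypothesis gives
`c² (c u - e) ≤ c² (e^* / c_m ^ μ - e_*) ≤ μ m² e_*² ≤ μ m² (c u)²`. -/

open Set Real

lemma quadratic_nonneg_of_sq_mul_sub_le {a₀ a b k u U : ℝ} (ha₀ : 0 ≤ a₀) (ha : a₀ ≤ a)
    (hb : 0 < b) (hk : 0 ≤ k) (huU : u ≤ U) (hU : b ^ 2 * (b * U - a₀) ≤ k * a₀ ^ 2) :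
    0 ≤ a - b * u + k * u ^ 2 := by
  rcases le_or_gt (b * u) a with hle | hlt
  · nlinarith [mul_nonneg hk (sq_nonneg u)]
  have hsq : a₀ ^ 2 ≤ (b * u) ^ 2 := pow_le_pow_left₀ ha₀ (ha.trans hlt.le) 2
  have hscaled : b ^ 2 * (b * u - a) ≤ b ^ 2 * (k * u ^ 2) :=
    calc b ^ 2 * (b * u - a) ≤ b ^ 2 * (b * U - a₀) := by gcongr
      _ ≤ k * a₀ ^ 2 := hU
      _ ≤ k * (b * u) ^ 2 := by gcongr
      _ = b ^ 2 * (k * u ^ 2) := by ring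
  linarith [le_of_mul_le_mul_left hscaled (by positivity)]

lemma div_mul_rpow_sub_div_mul_rpow_add_mul_eq {μ a b k x : ℝ} (hμ0 : μ ≠ 0) (hμ1 : μ ≠ 1)
    (hx : 0 ≤ x) :
    a / μ * x ^ (1 - 2 * μ) - b / μ * x ^ (1 - μ) + k * x
      = x ^ (1 - 2 * μ) / μ * (a - b * x ^ μ + μ * k * (x ^ μ) ^ 2) := by
  have h1 : x ^ (1 - μ) = x ^ (1 - 2 * μ) * x ^ μ := by
    rw [← rpow_add' hx (by intro h; exact hμ1 (by linarith))]; ring_nf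
  have h2 : x = x ^ (1 - 2 * μ) * (x ^ μ) ^ 2 := by
    have hexp : 1 - 2 * μ + μ * (2 : ℕ) = 1 := by push_cast; ring
    rw [← rpow_mul_natCast hx, ← rpow_add' hx (by rw [hexp]; norm_num), hexp, rpow_one]
  rw [h1]
  linear_combination (norm := (field_simp; ring)) k * h2

lemma one_div_mul_rpow_one_div_rpow {μ d y : ℝ} (hμ : μ ≠ 0) (hd : 0 < d) (hy : 0 ≤ y) :
    (1 / d * y ^ (1 / μ)) ^ μ = y / d ^ μ := by
  rw [mul_rpow (by positivity) (by positivity), div_rpow zero_le_one hd.le, one_rpow,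
    ← rpow_mul hy, one_div_mul_cancel hμ, rpow_one, one_div_mul_eq_div]

lemma div_mul_rpow_sub_div_mul_rpow_add_mul_nonneg {μ c k a₀ a R x : ℝ} (hμ0 : 0 < μ)
    (hμ1 : μ ≠ 1) (hc : 0 < c) (hk : 0 ≤ k) (ha₀ : 0 ≤ a₀) (ha : a₀ ≤ a)
    (hR : c ^ 2 * (c * R ^ μ - a₀) ≤ μ * k * a₀ ^ 2) (hx : x ∈ Icc 0 R) :
    0 ≤ a / μ * x ^ (1 - 2 * μ) - c / μ * x ^ (1 - μ) + k * x := by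
  rw [div_mul_rpow_sub_div_mul_rpow_add_mul_eq hμ0.ne' hμ1 hx.1]
  have hu : x ^ μ ≤ R ^ μ := rpow_le_rpow hx.1 hx.2 hμ0.le
  exact mul_nonneg (div_nonneg (rpow_nonneg hx.1 _) hμ0.le)
    (quadratic_nonneg_of_sq_mul_sub_le ha₀ ha hc (by positivity) hu hR)

theorem statement11_general (μ c m estar estar' cm R₂ : ℝ)
    (hμ0 : 0 < μ) (hμ : μ < 1/2) (hc : 0 < c)
    (hestar : 0 < estar) (hee : estar ≤ estar') (hcm : cm ∈ Set.Ioo (0:ℝ) 1)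
    (hC6 : c ^ 2 / (μ * estar ^ 2) * (estar' / cm ^ μ - estar) ≤ m ^ 2)
    (hR₂ : R₂ = (1 / cm) * (estar' / c) ^ (1 / μ)) :
    (∀ x ∈ Set.Icc (0:ℝ) R₂,
      0 ≤ (estar / μ) * x ^ (1 - 2 * μ) - (c / μ) * x ^ (1 - μ) + m ^ 2 * x) ∧
    (∀ T : ℝ, 0 < T → ∀ e : ℝ → ℝ, ContinuousOn e (Set.Icc 0 T) →
      IsLeast (e '' Set.Icc 0 T) estar → IsGreatest (e '' Set.Icc 0 T) estar' →
      ∀ t ∈ Set.Icc 0 T, ∀ x ∈ Set.Icc (0:ℝ) R₂,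
        0 ≤ (e t / μ) * x ^ (1 - 2 * μ) - (c / μ) * x ^ (1 - μ) + m ^ 2 * x) := by
  have hcR : c * R₂ ^ μ = estar' / cm ^ μ := by
    have : 0 ≤ estar' / c := div_nonneg (hestar.le.trans hee) hc.le
    rw [hR₂, one_div_mul_rpow_one_div_rpow hμ0.ne' hcm.1 this]
    field_simp
  have hR : c ^ 2 * (c * R₂ ^ μ - estar) ≤ μ * m ^ 2 * estar ^ 2 := by
    rw [← hcR, div_mul_eq_mul_div, div_le_iff₀ (by positivity)] at hC6
    linarith
  have hμ1 : μ ≠ 1 := by linarith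
  have hnonneg : ∀ a, estar ≤ a → ∀ x ∈ Icc 0 R₂,
      0 ≤ a / μ * x ^ (1 - 2 * μ) - c / μ * x ^ (1 - μ) + m ^ 2 * x := fun _ ha _ ↦
    div_mul_rpow_sub_div_mul_rpow_add_mul_nonneg hμ0 hμ1 hc (sq_nonneg m) hestar.le ha hR
  exact ⟨hnonneg estar le_rfl,
    fun T _ e _ hmin _ t ht ↦ hnonneg (e t) (hmin.2 ⟨t, ht, rfl⟩)⟩

theorem statement11 (μ c m estar estar' cm R₂ : ℝ)
    (hμ0 : 0 < μ) (hμ : μ < 1/2) (hc : 0 < c) (hm : 0 < m)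
    (hestar : 0 < estar) (hee : estar ≤ estar') (hcm : cm ∈ Set.Ioo (0:ℝ) 1)
    (hC6 : c ^ 2 / (μ * estar ^ 2) * (estar' / cm ^ μ - estar) ≤ m ^ 2)
    (hR₂ : R₂ = (1 / cm) * (estar' / c) ^ (1 / μ)) :
    (∀ x ∈ Set.Icc (0:ℝ) R₂,
      0 ≤ (estar / μ) * x ^ (1 - 2 * μ) - (c / μ) * x ^ (1 - μ) + m ^ 2 * x) ∧
    (∀ T : ℝ, 0 < T → ∀ e : ℝ → ℝ, ContinuousOn e (Set.Icc 0 T) →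
      IsLeast (e '' Set.Icc 0 T) estar → IsGreatest (e '' Set.Icc 0 T) estar' →
      ∀ t ∈ Set.Icc 0 T, ∀ x ∈ Set.Icc (0:ℝ) R₂,
        0 ≤ (e t / μ) * x ^ (1 - 2 * μ) - (c / μ) * x ^ (1 - μ) + m ^ 2 * x) :=
  statement11_general μ c m estar estar' cm R₂ hμ0 hμ hc hestar hee hcm hC6 hR₂
end

section
/- Let 0<μ<1/2, c>0, m>0, c_m∈(0,1), T>0, and let e:[0,T]→ℝ be continuous with min e = e_* > 0. Set f_m(t,x) = (e(t)/μ)x^{1−2μ} − (c/μ)x^{1−μ} + m²x. If R₁>0 satisfies (1−c_m) m² μ R₁^{2μ} + c R₁^μ ≤ e_* c_m^{1−2μ}, then f_m(t,x) ≥ m² R₁ for all t∈[0,T] and all x∈[c_m R₁, R₁]. Moreover, for every R₂>0 there exists R₁∈(0,R₂) satisfying the inequality (1−c_m) m² μ R₁^{2μ} + c R₁^μ ≤ e_* c_m^{1−2μ}. -/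
open Set Real

theorem statement13 (μ c m cm T estar : ℝ) (e : ℝ → ℝ)
    (hμ0 : 0 < μ) (hμ : μ < 1/2) (hc : 0 < c) (hm : 0 < m)
    (hcm : cm ∈ Set.Ioo (0:ℝ) 1) (hT : 0 < T)
    (he : ContinuousOn e (Set.Icc 0 T))
    (hmin : IsLeast (e '' Set.Icc 0 T) estar) (hestar : 0 < estar) :
    (∀ R₁ : ℝ, 0 < R₁ →
      (1 - cm) * m ^ 2 * μ * R₁ ^ (2 * μ) + c * R₁ ^ μ ≤ estar * cm ^ (1 - 2 * μ) →
      ∀ t ∈ Set.Icc 0 T, ∀ x ∈ Set.Icc (cm * R₁) R₁,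
        m ^ 2 * R₁ ≤ (e t / μ) * x ^ (1 - 2 * μ) - (c / μ) * x ^ (1 - μ) + m ^ 2 * x) ∧
    (∀ R₂ : ℝ, 0 < R₂ → ∃ R₁ ∈ Set.Ioo (0:ℝ) R₂,
      (1 - cm) * m ^ 2 * μ * R₁ ^ (2 * μ) + c * R₁ ^ μ ≤ estar * cm ^ (1 - 2 * μ)) := by
  obtain ⟨hcm0, hcm1⟩ := hcm
  have h1cm : 0 < 1 - cm := by linarith
  constructor
  · intro R₁ hR₁ h t ht x hx
    obtain ⟨hx1, hx2⟩ := hx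
    have hx0 : 0 < x := lt_of_lt_of_le (by positivity) hx1
    have het : estar ≤ e t := hmin.2 ⟨t, ht, rfl⟩
    have hexp : (0:ℝ) ≤ 1 - 2 * μ := by linarith
    have h1 : (cm * R₁) ^ (1 - 2 * μ) = cm ^ (1 - 2 * μ) * R₁ ^ (1 - 2 * μ) :=
      Real.mul_rpow hcm0.le hR₁.le
    have h2 : R₁ ^ (2 * μ) * R₁ ^ (1 - 2 * μ) = R₁ := by
      rw [← Real.rpow_add hR₁]; norm_num
    have h3 : R₁ ^ μ * R₁ ^ (1 - 2 * μ) = R₁ ^ (1 - μ) := by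
      rw [← Real.rpow_add hR₁]; ring_nf
    have h4 : (cm * R₁) ^ (1 - 2 * μ) ≤ x ^ (1 - 2 * μ) :=
      Real.rpow_le_rpow (by positivity) hx1 hexp
    have h5 : x ^ (1 - μ) ≤ R₁ ^ (1 - μ) :=
      Real.rpow_le_rpow hx0.le hx2 (by linarith)
    have hA : 0 < R₁ ^ (1 - 2 * μ) := Real.rpow_pos_of_pos hR₁ _
    have key : ((1 - cm) * m ^ 2 * μ * R₁ ^ (2 * μ) + c * R₁ ^ μ) * R₁ ^ (1 - 2 * μ)
        ≤ estar * cm ^ (1 - 2 * μ) * R₁ ^ (1 - 2 * μ) :=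
      mul_le_mul_of_nonneg_right h hA.le
    have key2 : (1 - cm) * m ^ 2 * μ * R₁ + c * R₁ ^ (1 - μ)
        ≤ estar * ((cm * R₁) ^ (1 - 2 * μ)) := by
      have e1 : (1 - cm) * m ^ 2 * μ * R₁
          = (1 - cm) * m ^ 2 * μ * (R₁ ^ (2 * μ) * R₁ ^ (1 - 2 * μ)) := by rw [h2]
      have e2 : c * R₁ ^ (1 - μ) = c * (R₁ ^ μ * R₁ ^ (1 - 2 * μ)) := by rw [h3]
      rw [h1, e1, e2]
      nlinarith [key]
    have h6 : estar * (cm * R₁) ^ (1 - 2 * μ) ≤ e t * x ^ (1 - 2 * μ) := by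
      have hp := Real.rpow_pos_of_pos (show 0 < cm * R₁ by positivity) (1 - 2 * μ)
      nlinarith
    have hfinal : μ * (m ^ 2 * R₁)
        ≤ μ * (e t / μ * x ^ (1 - 2 * μ) - c / μ * x ^ (1 - μ) + m ^ 2 * x) := by
      have expand : μ * (e t / μ * x ^ (1 - 2 * μ) - c / μ * x ^ (1 - μ) + m ^ 2 * x)
          = e t * x ^ (1 - 2 * μ) - c * x ^ (1 - μ) + μ * m ^ 2 * x := by
        field_simp
      rw [expand]
      have hh5 : c * x ^ (1 - μ) ≤ c * R₁ ^ (1 - μ) :=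
        mul_le_mul_of_nonneg_left h5 hc.le
      have hhx : μ * m ^ 2 * (cm * R₁) ≤ μ * m ^ 2 * x :=
        mul_le_mul_of_nonneg_left hx1 (by positivity)
      linarith
    exact le_of_mul_le_mul_left hfinal hμ0
  · intro R₂ hR₂
    set K := estar * cm ^ (1 - 2 * μ) with hK
    have hKpos : 0 < K := by rw [hK]; positivity
    set A := (1 - cm) * m ^ 2 * μ + c with hA
    have hterm : 0 < (1 - cm) * m ^ 2 * μ := by positivity
    have hApos : 0 < A := by rw [hA]; linarith
    set r := min (R₂ / 2) (min 1 ((K / A) ^ (1 / μ))) with hr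
    have hrpos : 0 < r := by
      apply lt_min (by linarith)
      exact lt_min one_pos (Real.rpow_pos_of_pos (by positivity) _)
    refine ⟨r, ⟨hrpos, lt_of_le_of_lt (min_le_left _ _) (by linarith)⟩, ?_⟩
    have hr1 : r ≤ 1 := le_trans (min_le_right _ _) (min_le_left _ _)
    have hrμ : r ^ μ ≤ K / A := by
      have hrle : r ≤ (K / A) ^ (1 / μ) := le_trans (min_le_right _ _) (min_le_right _ _)
      have h := Real.rpow_le_rpow hrpos.le hrle hμ0.le
      rwa [← Real.rpow_mul (le_of_lt (by positivity : (0:ℝ) < K / A)), one_div,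
        inv_mul_cancel₀ hμ0.ne', Real.rpow_one] at h
    have hr2μ : r ^ (2 * μ) ≤ r ^ μ := by
      rw [two_mul, Real.rpow_add hrpos]
      have h1 : r ^ μ ≤ 1 := Real.rpow_le_one hrpos.le hr1 hμ0.le
      nlinarith [Real.rpow_pos_of_pos hrpos μ]
    have hrμpos : 0 < r ^ μ := Real.rpow_pos_of_pos hrpos μ
    have step : (1 - cm) * m ^ 2 * μ * r ^ (2 * μ) + c * r ^ μ ≤ A * r ^ μ := by
      rw [hA]
      nlinarith [mul_le_mul_of_nonneg_left hr2μ hterm.le]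
    calc (1 - cm) * m ^ 2 * μ * r ^ (2 * μ) + c * r ^ μ ≤ A * r ^ μ := step
      _ ≤ A * (K / A) := mul_le_mul_of_nonneg_left hrμ hApos.le
      _ = K := by field_simp
end

section
/- Let 0<μ<1/2, c>0, m>0, c_m∈(0,1), T>0, 0<R₁<R₂, and let e:[0,T]→ℝ be continuous with min e = e_* satisfying (C1): e_* ≤ 0 and (c_m R₁)^μ ≥ (c+sqrt(c²−4μm²e_*))/(2μm²). Then f_m(t,x) = (e(t)/μ)x^{1−2μ} − (c/μ)x^{1−μ} + m²x ≥ 0 for all t∈[0,T] and all x∈[c_m R₁, R₂]. -/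
open Set Real

theorem statement14 (μ c m cm T R₁ R₂ estar : ℝ) (e : ℝ → ℝ)
    (hμ0 : 0 < μ) (hμ : μ < 1/2) (hc : 0 < c) (hm : 0 < m)
    (hcm : cm ∈ Set.Ioo (0:ℝ) 1) (hT : 0 < T)
    (hR₁ : 0 < R₁) (hR₁₂ : R₁ < R₂)
    (he : ContinuousOn e (Set.Icc 0 T))
    (hmin : IsLeast (e '' Set.Icc 0 T) estar)
    (hC1 : estar ≤ 0 ∧
      (c + Real.sqrt (c ^ 2 - 4 * μ * m ^ 2 * estar)) / (2 * μ * m ^ 2) ≤ (cm * R₁) ^ μ) :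
    ∀ t ∈ Set.Icc 0 T, ∀ x ∈ Set.Icc (cm * R₁) R₂,
      0 ≤ (e t / μ) * x ^ (1 - 2 * μ) - (c / μ) * x ^ (1 - μ) + m ^ 2 * x := by
  obtain ⟨hestar, hroot⟩ := hC1
  intro t ht x hx
  have hcmR : 0 < cm * R₁ := mul_pos hcm.1 hR₁
  have hx0 : 0 < x := lt_of_lt_of_le hcmR hx.1
  have het : estar ≤ e t := hmin.2 ⟨t, ht, rfl⟩
  set s := Real.sqrt (c ^ 2 - 4 * μ * m ^ 2 * estar) with hs
  have hs0 : 0 ≤ s := Real.sqrt_nonneg _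
  have hs2 : s ^ 2 = c ^ 2 - 4 * μ * m ^ 2 * estar := by
    rw [hs, Real.sq_sqrt]
    nlinarith [sq_nonneg c, mul_pos hμ0 (pow_pos hm 2)]
  set y := x ^ μ with hy
  have hy0 : 0 < y := Real.rpow_pos_of_pos hx0 μ
  have hyge : (cm * R₁) ^ μ ≤ y := Real.rpow_le_rpow hcmR.le hx.1 hμ0.le
  have hyroot : (c + s) / (2 * μ * m ^ 2) ≤ y := le_trans hroot hyge
  have hden : 0 < 2 * μ * m ^ 2 := by positivity
  have h1' : c + s ≤ 2 * μ * m ^ 2 * y := by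
    rw [div_le_iff₀ hden] at hyroot; linarith
  have hkey : 0 ≤ μ * m ^ 2 * y ^ 2 - c * y + e t := by
    nlinarith [sq_nonneg (2 * μ * m ^ 2 * y - c - s), mul_nonneg hs0 (sub_nonneg.mpr h1')]
  have h1 : x ^ (1 - μ) = x ^ (1 - 2 * μ) * y := by
    rw [hy, ← Real.rpow_add hx0]; ring_nf
  have h2 : x = x ^ (1 - 2 * μ) * y ^ 2 := by
    rw [hy, ← Real.rpow_natCast (x ^ μ) 2, ← Real.rpow_mul hx0.le, ← Real.rpow_add hx0,
      show 1 - 2 * μ + μ * ((2:ℕ):ℝ) = (1:ℝ) by push_cast; ring, Real.rpow_one]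
  have hA : 0 < x ^ (1 - 2 * μ) := Real.rpow_pos_of_pos hx0 _
  have expand : (e t / μ) * x ^ (1 - 2 * μ) - (c / μ) * x ^ (1 - μ) + m ^ 2 * x
      = (x ^ (1 - 2 * μ) / μ) * (μ * m ^ 2 * y ^ 2 - c * y + e t) := by
    rw [h1, show m ^ 2 * x = m ^ 2 * (x ^ (1 - 2 * μ) * y ^ 2) from by rw [← h2]]
    field_simp
    ring
  rw [expand]
  exact mul_nonneg (div_nonneg hA.le hμ0.le) hkey
end

section
/- Let 0<μ<1/2, c>0, m>0, c_m∈(0,1), R₂>0, 0<R₁<R₂, T>0, and let e:[0,T]→ℝ be continuous with min e = e_* and max e = e^*, satisfying (C1): e_* ≤ 0 and (c_m R₁)^μ ≥ (c+sqrt(c²−4μm²e_*))/(2μm²), and (C4): e^* ≤ c R₂^μ. Then e^* ≤ μ m² R₂ x^{2μ−1} + c x^μ − μ m² x^{2μ} for all x∈[c_m R₂, R₂]; in particular the function x ↦ μ m² R₂ x^{2μ−1} + c x^μ − μ m² x^{2μ} is strictly decreasing on [c_m R₂, R₂]. -/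
open Set Real

theorem statement15 (μ c m cm T R₁ R₂ estar estar' : ℝ) (e : ℝ → ℝ)
    (hμ0 : 0 < μ) (hμ : μ < 1/2) (hc : 0 < c) (hm : 0 < m)
    (hcm : cm ∈ Set.Ioo (0:ℝ) 1) (hT : 0 < T)
    (hR₂ : 0 < R₂) (hR₁ : 0 < R₁) (hR₁₂ : R₁ < R₂)
    (he : ContinuousOn e (Set.Icc 0 T))
    (hmin : IsLeast (e '' Set.Icc 0 T) estar)
    (hmax : IsGreatest (e '' Set.Icc 0 T) estar')
    (hC1 : estar ≤ 0 ∧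
      (c + Real.sqrt (c ^ 2 - 4 * μ * m ^ 2 * estar)) / (2 * μ * m ^ 2) ≤ (cm * R₁) ^ μ)
    (hC4 : estar' ≤ c * R₂ ^ μ) :
    (∀ x ∈ Set.Icc (cm * R₂) R₂,
      estar' ≤ μ * m ^ 2 * R₂ * x ^ (2 * μ - 1) + c * x ^ μ - μ * m ^ 2 * x ^ (2 * μ)) ∧
    StrictAntiOn (fun x : ℝ => μ * m ^ 2 * R₂ * x ^ (2 * μ - 1) + c * x ^ μ - μ * m ^ 2 * x ^ (2 * μ))
      (Set.Icc (cm * R₂) R₂) := by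
  set g : ℝ → ℝ := fun x : ℝ =>
    μ * m ^ 2 * R₂ * x ^ (2 * μ - 1) + c * x ^ μ - μ * m ^ 2 * x ^ (2 * μ) with hg
  have hcm0 : 0 < cm := hcm.1
  have hcm1 : cm < 1 := hcm.2
  have hcmR₂ : 0 < cm * R₂ := mul_pos hcm0 hR₂
  have hcmR₁ : 0 < cm * R₁ := mul_pos hcm0 hR₁
  -- key bound : c ≤ μ m² (cm R₁)^μ
  have hsqrt : c ≤ Real.sqrt (c ^ 2 - 4 * μ * m ^ 2 * estar) := by
    have h1 : c ^ 2 ≤ c ^ 2 - 4 * μ * m ^ 2 * estar := by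
      nlinarith [mul_nonpos_of_nonneg_of_nonpos (by positivity : (0:ℝ) ≤ 4 * μ * m ^ 2) hC1.1]
    calc c = Real.sqrt (c ^ 2) := by rw [Real.sqrt_sq hc.le]
      _ ≤ _ := Real.sqrt_le_sqrt h1
  have hden : 0 < 2 * μ * m ^ 2 := by positivity
  have hkey1 : c ≤ μ * m ^ 2 * (cm * R₁) ^ μ := by
    have h2 := hC1.2
    rw [div_le_iff₀ hden] at h2
    nlinarith
  have hkey : ∀ x : ℝ, cm * R₂ ≤ x → c ≤ μ * m ^ 2 * x ^ μ := by
    intro x hx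
    have hle : cm * R₁ ≤ x := by nlinarith
    have := Real.rpow_le_rpow hcmR₁.le hle hμ0.le
    nlinarith
  -- derivative
  have hd : ∀ x : ℝ, 0 < x → HasDerivAt g
      (μ * m ^ 2 * R₂ * ((2 * μ - 1) * x ^ (2 * μ - 1 - 1)) + c * (μ * x ^ (μ - 1))
        - μ * m ^ 2 * ((2 * μ) * x ^ (2 * μ - 1))) x := by
    intro x hx
    have h1 := Real.hasDerivAt_rpow_const (x := x) (p := 2 * μ - 1) (Or.inl hx.ne')
    have h2 := Real.hasDerivAt_rpow_const (x := x) (p := μ) (Or.inl hx.ne')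
    have h3 := Real.hasDerivAt_rpow_const (x := x) (p := 2 * μ) (Or.inl hx.ne')
    exact ((h1.const_mul _).add (h2.const_mul _)).sub (h3.const_mul _)
  have hanti : StrictAntiOn g (Set.Icc (cm * R₂) R₂) := by
    apply strictAntiOn_of_deriv_neg (convex_Icc _ _)
    · have hne : ∀ x ∈ Set.Icc (cm * R₂) R₂, x ≠ 0 ∨ True := fun x hx => Or.inr trivial
      have hpos : ∀ x ∈ Set.Icc (cm * R₂) R₂, 0 < x := fun x hx => lt_of_lt_of_le hcmR₂ hx.1
      apply ContinuousOn.sub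
      apply ContinuousOn.add
      · exact continuousOn_const.mul (continuousOn_id.rpow_const fun x hx => Or.inl (hpos x hx).ne')
      · exact continuousOn_const.mul (continuousOn_id.rpow_const fun x hx => Or.inl (hpos x hx).ne')
      · exact continuousOn_const.mul (continuousOn_id.rpow_const fun x hx => Or.inl (hpos x hx).ne')
    · intro x hx
      rw [interior_Icc] at hx
      have hx0 : 0 < x := lt_trans hcmR₂ hx.1
      rw [(hd x hx0).deriv]
      have hA : 0 < x ^ (2 * μ - 1 - 1) := Real.rpow_pos_of_pos hx0 _
      have hB : 0 < x ^ (μ - 1) := Real.rpow_pos_of_pos hx0 _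
      have hC : 0 < x ^ μ := Real.rpow_pos_of_pos hx0 _
      have hsplit : x ^ (2 * μ - 1) = x ^ μ * x ^ (μ - 1) := by
        rw [← Real.rpow_add hx0]; ring_nf
      have hcc := hkey x hx.1.le
      rw [hsplit]
      nlinarith [mul_le_mul_of_nonneg_left hcc (by positivity : (0:ℝ) ≤ μ * x ^ (μ - 1)),
        mul_pos (show (0:ℝ) < 1 - 2 * μ by linarith)
          (mul_pos (mul_pos (mul_pos hμ0 (pow_pos hm 2)) hR₂) hA),
        mul_pos (mul_pos (mul_pos (mul_pos hμ0 hμ0) (pow_pos hm 2)) hC) hB]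
  have hgR₂ : g R₂ = c * R₂ ^ μ := by
    have h : R₂ ^ (2 * μ) = R₂ * R₂ ^ (2 * μ - 1) := by
      have h0 := Real.rpow_add hR₂ 1 (2 * μ - 1)
      rw [Real.rpow_one, show 1 + (2 * μ - 1) = 2 * μ by ring] at h0
      exact h0
    simp only [hg]
    rw [h]; ring
  have hR₂mem : R₂ ∈ Set.Icc (cm * R₂) R₂ := ⟨by nlinarith, le_refl _⟩
  constructor
  · intro x hx
    rcases eq_or_lt_of_le hx.2 with heq | hlt
    · subst heq
      have : g x = c * x ^ μ := hgR₂
      simpa only [hg] using hC4.trans_eq this.symm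
    · have := hanti hx hR₂mem hlt
      rw [hgR₂] at this
      exact le_of_lt (lt_of_le_of_lt hC4 this)
  · exact hanti
end

section
/- Let 0<μ<1/2, c>0, m>0, κ>0, c_m∈(0,1), R₁>0, T>0, and let e:[0,T]→ℝ be continuous with min e = e_*, satisfying (C1): e_* ≤ 0 and (c_m R₁)^μ ≥ (c+sqrt(c²−4μm²e_*))/(2μm²), and (C2): (c_m R₁)^{1−2μ} ≥ κμ. Then for every t∈[0,T] with e(t) ≥ 0 and every x∈[c_m R₁, R₁], one has e(t)·(x^{1−2μ} − κμ) ≥ x^{1−μ}·(c − μ m² x^μ). Consequently, with f_m(t,x) = (e(t)/μ)x^{1−2μ} − (c/μ)x^{1−μ} + m²x and e₊(t)=max{e(t),0}, one has f_m(t,x) ≥ κ e₊(t) for all t∈[0,T] and x∈[c_m R₁, R₁]. -/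
open Set Real

theorem statement16 (μ c m κ cm T R₁ estar : ℝ) (e : ℝ → ℝ)
    (hμ0 : 0 < μ) (hμ : μ < 1/2) (hc : 0 < c) (hm : 0 < m) (hκ : 0 < κ)
    (hcm : cm ∈ Set.Ioo (0:ℝ) 1) (hT : 0 < T) (hR₁ : 0 < R₁)
    (he : ContinuousOn e (Set.Icc 0 T))
    (hmin : IsLeast (e '' Set.Icc 0 T) estar)
    (hC1 : estar ≤ 0 ∧
      (c + Real.sqrt (c ^ 2 - 4 * μ * m ^ 2 * estar)) / (2 * μ * m ^ 2) ≤ (cm * R₁) ^ μ)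
    (hC2 : κ * μ ≤ (cm * R₁) ^ (1 - 2 * μ)) :
    (∀ t ∈ Set.Icc 0 T, 0 ≤ e t → ∀ x ∈ Set.Icc (cm * R₁) R₁,
      x ^ (1 - μ) * (c - μ * m ^ 2 * x ^ μ) ≤ e t * (x ^ (1 - 2 * μ) - κ * μ)) ∧
    (∀ t ∈ Set.Icc 0 T, ∀ x ∈ Set.Icc (cm * R₁) R₁,
      κ * max (e t) 0 ≤ (e t / μ) * x ^ (1 - 2 * μ) - (c / μ) * x ^ (1 - μ) + m ^ 2 * x) := by
  obtain ⟨hes, hC1b⟩ := hC1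
  have hcmR : 0 < cm * R₁ := mul_pos hcm.1 hR₁
  have hmm : 0 < 2 * μ * m ^ 2 := by positivity
  have hD : 0 ≤ c ^ 2 - 4 * μ * m ^ 2 * estar := by nlinarith [sq_nonneg c, sq_nonneg m]
  set s := Real.sqrt (c ^ 2 - 4 * μ * m ^ 2 * estar) with hs_def
  have hs0 : 0 ≤ s := Real.sqrt_nonneg _
  have hs2 : s ^ 2 = c ^ 2 - 4 * μ * m ^ 2 * estar := Real.sq_sqrt hD
  -- key facts for x in the interval
  have key : ∀ x ∈ Set.Icc (cm * R₁) R₁,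
      0 < x ∧ c + s ≤ 2 * μ * m ^ 2 * x ^ μ ∧ κ * μ ≤ x ^ (1 - 2 * μ) := by
    intro x hx
    have hx0 : 0 < x := lt_of_lt_of_le hcmR hx.1
    have h1 : (cm * R₁) ^ μ ≤ x ^ μ := Real.rpow_le_rpow hcmR.le hx.1 hμ0.le
    have h2 : (cm * R₁) ^ (1 - 2 * μ) ≤ x ^ (1 - 2 * μ) :=
      Real.rpow_le_rpow hcmR.le hx.1 (by linarith)
    have h3 : c + s ≤ 2 * μ * m ^ 2 * x ^ μ := by
      have := (div_le_iff₀ hmm).mp (hC1b.trans h1)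
      linarith
    exact ⟨hx0, h3, hC2.trans h2⟩
  have part1 : ∀ t ∈ Set.Icc 0 T, 0 ≤ e t → ∀ x ∈ Set.Icc (cm * R₁) R₁,
      x ^ (1 - μ) * (c - μ * m ^ 2 * x ^ μ) ≤ e t * (x ^ (1 - 2 * μ) - κ * μ) := by
    intro t _ het x hx
    obtain ⟨hx0, h3, h4⟩ := key x hx
    have hcs : c ≤ s + c := by linarith
    have hneg : c - μ * m ^ 2 * x ^ μ ≤ 0 := by nlinarith
    have hp : (0:ℝ) ≤ x ^ (1 - μ) := Real.rpow_nonneg hx0.le _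
    have : x ^ (1 - μ) * (c - μ * m ^ 2 * x ^ μ) ≤ 0 :=
      mul_nonpos_of_nonneg_of_nonpos hp hneg
    have : 0 ≤ e t * (x ^ (1 - 2 * μ) - κ * μ) :=
      mul_nonneg het (by linarith)
    linarith
  refine ⟨part1, ?_⟩
  intro t ht x hx
  obtain ⟨hx0, h3, h4⟩ := key x hx
  have ha : x ^ (1 - 2 * μ) * x ^ μ = x ^ (1 - μ) := by
    rw [← Real.rpow_add hx0]; ring_nf
  have hb : x ^ (1 - μ) * x ^ μ = x := by
    rw [← Real.rpow_add hx0, show 1 - μ + μ = (1:ℝ) by ring, Real.rpow_one]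
  have hxp : (0:ℝ) ≤ x ^ (1 - 2 * μ) := Real.rpow_nonneg hx0.le _
  have hrw : (e t * x ^ (1 - 2 * μ) - c * x ^ (1 - μ) + μ * (m ^ 2 * x)) / μ
      = (e t / μ) * x ^ (1 - 2 * μ) - (c / μ) * x ^ (1 - μ) + m ^ 2 * x := by
    field_simp
  rcases le_or_gt 0 (e t) with het | het
  · rw [max_eq_left het]
    have h := part1 t ht het x hx
    have hb2 : μ * (m ^ 2 * x) = μ * (m ^ 2 * (x ^ (1 - μ) * x ^ μ)) := by rw [hb]
    have hstep : κ * e t * μ ≤ e t * x ^ (1 - 2 * μ) - c * x ^ (1 - μ) + μ * (m ^ 2 * x) := by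
      rw [hb2]; nlinarith [h]
    have hfin : κ * e t ≤ (e t * x ^ (1 - 2 * μ) - c * x ^ (1 - μ) + μ * (m ^ 2 * x)) / μ :=
      (le_div_iff₀ hμ0).mpr hstep
    rwa [hrw] at hfin
  · rw [max_eq_right het.le, mul_zero]
    have hest : estar ≤ e t := hmin.2 ⟨t, ht, rfl⟩
    have hy : 0 ≤ x ^ μ := Real.rpow_nonneg hx0.le _
    have hquad : 0 ≤ μ * m ^ 2 * (x ^ μ * x ^ μ) - c * x ^ μ + estar := by
      have h5 : s ≤ 2 * μ * m ^ 2 * x ^ μ - c := by linarith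
      have h6 : s * s ≤ (2 * μ * m ^ 2 * x ^ μ - c) * (2 * μ * m ^ 2 * x ^ μ - c) :=
        mul_self_le_mul_self hs0 h5
      nlinarith [h6, hs2]
    have t1 : 0 ≤ x ^ (1 - 2 * μ) * (μ * m ^ 2 * (x ^ μ * x ^ μ) - c * x ^ μ + estar) :=
      mul_nonneg hxp hquad
    have t2 : estar * x ^ (1 - 2 * μ) ≤ e t * x ^ (1 - 2 * μ) :=
      mul_le_mul_of_nonneg_right hest hxp
    have hab : x ^ (1 - 2 * μ) * (x ^ μ * x ^ μ) = x := by
      rw [← mul_assoc, ha, hb]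
    have eq1 : c * x ^ (1 - μ) = c * (x ^ (1 - 2 * μ) * x ^ μ) := by rw [ha]
    have eq2 : μ * (m ^ 2 * x) = μ * (m ^ 2 * (x ^ (1 - 2 * μ) * (x ^ μ * x ^ μ))) := by
      rw [hab]
    have hmain : 0 ≤ e t * x ^ (1 - 2 * μ) - c * x ^ (1 - μ) + μ * (m ^ 2 * x) := by
      rw [eq1, eq2]; linarith [t1, t2]
    have hfin : (0:ℝ) ≤ (e t * x ^ (1 - 2 * μ) - c * x ^ (1 - μ) + μ * (m ^ 2 * x)) / μ :=
      div_nonneg hmain hμ0.le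
    rwa [hrw] at hfin
end

section
/- Let T>0, a≥0, b>1, c>0, let e:[0,T]→ℝ be continuous, and set μ = 1/(b+1), so that 0<μ<1/2. If x:[0,T]→(0,∞) is twice continuously differentiable, satisfies x''(t)+a x'(t) = (e(t)/μ)x(t)^{1−2μ} − (c/μ)x(t)^{1−μ} for all t∈[0,T], x(0)=x(T) and x'(0)=x'(T), then u = x^μ is a positive twice continuously differentiable function on [0,T] satisfying u''(t)+a u'(t) = (1/u(t))·(e(t) − b·(u'(t))²) − c for all t∈[0,T], u(0)=u(T) and u'(0)=u'(T). -/
open Set Real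

/-!
Since `x > 0`, the chain rule gives `u' = μ x^(μ-1) x'` and
`u'' = μ x^(μ-1) x'' + μ(μ-1) x^(μ-2) x'^2`. Multiplying the equation for `x` by `μ x^(μ-1)`
turns its right-hand side into `e u⁻¹ - c`, and `μ(b+1) = 1` gives `μ(μ-1) = -bμ²`, so the
`x'^2` term of `u''` is exactly `-b u'^2 / u`.
-/

theorem derivWithin_derivWithin_rpow_const {s : Set ℝ} {f : ℝ → ℝ} {x : ℝ} (p : ℝ)
    (hs : UniqueDiffOn ℝ s) (hf : DifferentiableOn ℝ f s)
    (hf' : DifferentiableOn ℝ (derivWithin f s) s) (h0 : ∀ y ∈ s, f y ≠ 0) (hx : x ∈ s) :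
    derivWithin (derivWithin (fun y => f y ^ p) s) s x =
      derivWithin (derivWithin f s) s x * p * f x ^ (p - 1) +
        derivWithin f s x ^ 2 * p * (p - 1) * f x ^ (p - 2) := by
  have hderiv : EqOn (derivWithin (fun y => f y ^ p) s)
      (fun y => derivWithin f s y * p * f y ^ (p - 1)) s := fun y hy =>
    derivWithin_rpow_const (hf y hy) (Or.inl (h0 y hy)) (hs y hy)
  rw [derivWithin_congr hderiv (hderiv hx)]
  have hp : p - 1 - 1 = p - 2 := by ring
  have hd : HasDerivWithinAt (fun y => derivWithin f s y * p * f y ^ (p - 1))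
      (derivWithin (derivWithin f s) s x * p * f x ^ (p - 1) +
        derivWithin f s x * p * (derivWithin f s x * (p - 1) * f x ^ (p - 1 - 1))) s x :=
    ((hf' x hx).hasDerivWithinAt.mul_const p).mul
      ((hf x hx).hasDerivWithinAt.rpow_const (Or.inl (h0 x hx)))
  rw [hd.derivWithin (hs x hx), hp]
  ring

theorem rpow_substitution_eq {a b c e μ X v w : ℝ} (hX : 0 < X) (hμ : μ * (b + 1) = 1)
    (h : w + a * v = e / μ * X ^ (1 - 2 * μ) - c / μ * X ^ (1 - μ)) :
    w * μ * X ^ (μ - 1) + v ^ 2 * μ * (μ - 1) * X ^ (μ - 2) + a * (v * μ * X ^ (μ - 1)) =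
      1 / X ^ μ * (e - b * (v * μ * X ^ (μ - 1)) ^ 2) - c := by
  have hμ0 : μ ≠ 0 := left_ne_zero_of_mul_eq_one hμ
  have he_term : X ^ (1 - 2 * μ) * X ^ (μ - 1) = X ^ (-μ) := by rw [← rpow_add hX]; ring_nf
  have hc_term : X ^ (1 - μ) * X ^ (μ - 1) = 1 := by rw [← rpow_add hX]; norm_num
  have hsq_term : X ^ (-μ) * (X ^ (μ - 1)) ^ 2 = X ^ (μ - 2) := by
    rw [sq, ← rpow_add hX, ← rpow_add hX]; ring_nf
  have hinv : 1 / X ^ μ = X ^ (-μ) := by rw [rpow_neg hX.le, one_div]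
  have hμb : μ * (μ - 1) = -(b * μ ^ 2) := by linear_combination μ * hμ
  have hscaled : μ * w + μ * (a * v) = e * X ^ (1 - 2 * μ) - c * X ^ (1 - μ) := by
    linear_combination μ * h + X ^ (1 - 2 * μ) * mul_div_cancel₀ e hμ0
      - X ^ (1 - μ) * mul_div_cancel₀ c hμ0
  rw [hinv]
  linear_combination X ^ (μ - 1) * hscaled + e * he_term - c * hc_term
    + v ^ 2 * X ^ (μ - 2) * hμb + b * μ ^ 2 * v ^ 2 * hsq_term

theorem statement18_general (T a b c μ : ℝ) (e : ℝ → ℝ)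
    (hT : 0 < T) (hb : 1 < b)
    (hμ : μ = 1 / (b + 1))
    (x : ℝ → ℝ)
    (hxpos : ∀ t ∈ Set.Icc 0 T, 0 < x t)
    (hx : ContDiffOn ℝ 2 x (Set.Icc 0 T))
    (hode : ∀ t ∈ Set.Icc 0 T,
      pd2 T x t + a * pd1 T x t =
        (e t / μ) * x t ^ (1 - 2 * μ) - (c / μ) * x t ^ (1 - μ))
    (hbc1 : x 0 = x T) (hbc2 : pd1 T x 0 = pd1 T x T) :
    (∀ t ∈ Set.Icc 0 T, 0 < x t ^ μ) ∧
    ContDiffOn ℝ 2 (fun t => x t ^ μ) (Set.Icc 0 T) ∧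
    (∀ t ∈ Set.Icc 0 T,
      pd2 T (fun t => x t ^ μ) t + a * pd1 T (fun t => x t ^ μ) t =
        (1 / x t ^ μ) * (e t - b * (pd1 T (fun t => x t ^ μ) t) ^ 2) - c) ∧
    x 0 ^ μ = x T ^ μ ∧
    pd1 T (fun t => x t ^ μ) 0 = pd1 T (fun t => x t ^ μ) T := by
  have hs : UniqueDiffOn ℝ (Icc (0 : ℝ) T) := uniqueDiffOn_Icc hT
  have hxd : DifferentiableOn ℝ x (Icc 0 T) := hx.differentiableOn two_ne_zero
  have hxd' : DifferentiableOn ℝ (pd1 T x) (Icc 0 T) :=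
    (hx.derivWithin hs (by norm_num)).differentiableOn one_ne_zero
  have hx0 : ∀ t ∈ Icc 0 T, x t ≠ 0 := fun t ht => (hxpos t ht).ne'
  have hu1 : ∀ t ∈ Icc 0 T, pd1 T (fun t => x t ^ μ) t = pd1 T x t * μ * x t ^ (μ - 1) :=
    fun t ht => derivWithin_rpow_const (hxd t ht) (Or.inl (hx0 t ht)) (hs t ht)
  have hμb : μ * (b + 1) = 1 := by rw [hμ, one_div_mul_cancel (by linarith)]
  refine ⟨fun t ht => rpow_pos_of_pos (hxpos t ht) μ,
    fun t ht => (hx t ht).rpow_const_of_ne (hx0 t ht), fun t ht => ?_, by rw [hbc1], ?_⟩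
  · rw [hu1 t ht, pd2, pd1, derivWithin_derivWithin_rpow_const μ hs hxd hxd' hx0 ht]
    exact rpow_substitution_eq (hxpos t ht) hμb (hode t ht)
  · rw [hu1 0 (left_mem_Icc.2 hT.le), hu1 T (right_mem_Icc.2 hT.le), hbc1, hbc2]

theorem statement18 (T a b c μ : ℝ) (e : ℝ → ℝ)
    (hT : 0 < T) (ha : 0 ≤ a) (hb : 1 < b) (hc : 0 < c)
    (he : ContinuousOn e (Set.Icc 0 T))
    (hμ : μ = 1 / (b + 1))
    (x : ℝ → ℝ)
    (hxpos : ∀ t ∈ Set.Icc 0 T, 0 < x t)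
    (hx : ContDiffOn ℝ 2 x (Set.Icc 0 T))
    (hode : ∀ t ∈ Set.Icc 0 T,
      pd2 T x t + a * pd1 T x t =
        (e t / μ) * x t ^ (1 - 2 * μ) - (c / μ) * x t ^ (1 - μ))
    (hbc1 : x 0 = x T) (hbc2 : pd1 T x 0 = pd1 T x T) :
    (∀ t ∈ Set.Icc 0 T, 0 < x t ^ μ) ∧
    ContDiffOn ℝ 2 (fun t => x t ^ μ) (Set.Icc 0 T) ∧
    (∀ t ∈ Set.Icc 0 T,
      pd2 T (fun t => x t ^ μ) t + a * pd1 T (fun t => x t ^ μ) t =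
        (1 / x t ^ μ) * (e t - b * (pd1 T (fun t => x t ^ μ) t) ^ 2) - c) ∧
    x 0 ^ μ = x T ^ μ ∧
    pd1 T (fun t => x t ^ μ) 0 = pd1 T (fun t => x t ^ μ) T :=
  statement18_general T a b c μ e hT hb hμ x hxpos hx hode hbc1 hbc2
end
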